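/- arXiv:2602.15805 — 3 statements merged into one kernel-verified Lean document; each statement's English description precedes it below -/
import Mathlib

section
/- Let N ≥ 1, a > 0, λ_ℓ ≥ 1 and δ_ℓ ∈ (-1, 0] for 1 ≤ ℓ ≤ N. Define g₀(x) = exp(|x|²_{-1}/(2a)) where |x|²_{-1} = Σ x_ℓ²/λ_ℓ, and let L̃ = Σ_ℓ λ_ℓ ( (a/2)(1+δ_ℓ) ∂_ℓ² - x_ℓ ∂_ℓ ). Then for every x ∈ ℝ^N, L̃ g₀(x) ≤ ((aN - |x|²)/(2a)) · exp(|x|²_{-1}/(2a)), and consequently L̃ g₀(x) ≤ (N/2) e^{N/2} for all x. -/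
noncomputable def pd {N : ℕ} (ℓ : Fin N) (f : (Fin N → ℝ) → ℝ) (x : Fin N → ℝ) : ℝ :=
  fderiv ℝ f x (Pi.single ℓ 1)

/-!
`g0` is the Gaussian `exp (∑ b_ℓ x_ℓ²)` with `b_ℓ = (2 a λ_ℓ)⁻¹`, so
`L̃ g0 = g0 · ∑ ((1 + δ_ℓ)(1/2 + x_ℓ²/(2 a λ_ℓ)) - x_ℓ²/a)`. Since `1 + δ_ℓ ≤ 1` and `λ_ℓ ≥ 1`,
each summand is at most `1/2 - x_ℓ²/(2a)`, which sums to `(aN - |x|²)/(2a)`. For the uniform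
bound, this prefactor is negative when `|x|² > aN`; otherwise it is at most `N/2` and
`|x|²_{-1} ≤ |x|² ≤ aN` bounds the exponential by `e^{N/2}`.
-/

open Finset Real

lemma pd_eq_of_hasFDerivAt {N : ℕ} {f : (Fin N → ℝ) → ℝ} {f' : (Fin N → ℝ) →L[ℝ] ℝ}
    {x : Fin N → ℝ} (hf : HasFDerivAt f f' x) (ℓ : Fin N) : pd ℓ f x = f' (Pi.single ℓ 1) := by
  rw [pd, hf.fderiv]

section Gaussian

variable {N : ℕ} (b : Fin N → ℝ)

lemma hasFDerivAt_sum_mul_sq (x : Fin N → ℝ) :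
    HasFDerivAt (fun y : Fin N → ℝ => ∑ ℓ, b ℓ * y ℓ ^ 2)
      (∑ ℓ, (2 * b ℓ * x ℓ) • ContinuousLinearMap.proj (R := ℝ) (φ := fun _ : Fin N => ℝ) ℓ)
      x := by
  refine HasFDerivAt.fun_sum fun ℓ _ => ?_
  refine (((hasFDerivAt_apply (𝕜 := ℝ) (F' := fun _ : Fin N => ℝ) ℓ x).pow 2).const_mul
    (b ℓ)).congr_fderiv ?_
  ext
  simp
  ring

lemma pd_exp_sum_mul_sq (j : Fin N) :
    pd j (fun y => exp (∑ ℓ, b ℓ * y ℓ ^ 2)) =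
      fun y => exp (∑ ℓ, b ℓ * y ℓ ^ 2) * (2 * b j * y j) := by
  funext x
  rw [pd_eq_of_hasFDerivAt (hasFDerivAt_sum_mul_sq b x).exp]
  simp [Pi.single_apply]

lemma pd_pd_exp_sum_mul_sq (j : Fin N) (x : Fin N → ℝ) :
    pd j (pd j (fun y => exp (∑ ℓ, b ℓ * y ℓ ^ 2))) x =
      exp (∑ ℓ, b ℓ * x ℓ ^ 2) * (2 * b j + (2 * b j * x j) ^ 2) := by
  rw [pd_exp_sum_mul_sq, pd_eq_of_hasFDerivAt
    ((hasFDerivAt_sum_mul_sq b x).exp.fun_mul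
      ((hasFDerivAt_apply (𝕜 := ℝ) (F' := fun _ : Fin N => ℝ) j x).const_mul (2 * b j)))]
  simp [Pi.single_apply]
  ring

end Gaussian

lemma gaussian_generator_term_le {a lam δ E : ℝ} (ha : 0 < a) (hlam : 1 ≤ lam) (hδ : δ ≤ 0)
    (hE : 0 ≤ E) (t : ℝ) :
    lam * (a / 2 * (1 + δ) * (E * (2 * (2 * a * lam)⁻¹ + (2 * (2 * a * lam)⁻¹ * t) ^ 2)) -
      t * (E * (2 * (2 * a * lam)⁻¹ * t))) ≤ E * (1 / 2 - t ^ 2 / (2 * a)) := by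
  have hlam0 : 0 < lam := by linarith
  have key : E * (1 / 2 - t ^ 2 / (2 * a)) -
      lam * (a / 2 * (1 + δ) * (E * (2 * (2 * a * lam)⁻¹ + (2 * (2 * a * lam)⁻¹ * t) ^ 2)) -
        t * (E * (2 * (2 * a * lam)⁻¹ * t))) =
      E * (t ^ 2 * (lam - 1) - δ * (a * lam + t ^ 2)) / (2 * a * lam) := by
    field_simp
    ring
  have hnum : 0 ≤ t ^ 2 * (lam - 1) - δ * (a * lam + t ^ 2) := by
    nlinarith [sq_nonneg t,
      mul_nonneg (neg_nonneg.2 hδ) (add_nonneg (mul_pos ha hlam0).le (sq_nonneg t))]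
  rw [← sub_nonneg, key]
  positivity

lemma sub_div_mul_exp_le {a n S Q : ℝ} (ha : 0 < a) (hn : 0 ≤ n) (hQ : 0 ≤ Q) (hQS : Q ≤ S) :
    (a * n - S) / (2 * a) * exp (Q / (2 * a)) ≤ n / 2 * exp (n / 2) := by
  rcases le_or_gt S (a * n) with hS | hS
  · have hfactor : (a * n - S) / (2 * a) ≤ n / 2 := by
      rw [div_le_div_iff₀ (by positivity) two_pos]
      nlinarith
    have hexponent : Q / (2 * a) ≤ n / 2 := by
      rw [div_le_div_iff₀ (by positivity) two_pos]
      nlinarith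
    exact mul_le_mul hfactor (exp_le_exp.2 hexponent) (exp_pos _).le (by positivity)
  · have hfactor : (a * n - S) / (2 * a) ≤ 0 :=
      div_nonpos_of_nonpos_of_nonneg (by linarith) (by positivity)
    calc (a * n - S) / (2 * a) * exp (Q / (2 * a)) ≤ 0 :=
          mul_nonpos_of_nonpos_of_nonneg hfactor (exp_pos _).le
      _ ≤ n / 2 * exp (n / 2) := by positivity

theorem stmt_6_general {N : ℕ} (a : ℝ) (ha : 0 < a)
    (lam : Fin N → ℝ) (hlam : ∀ ℓ, 1 ≤ lam ℓ)
    (δ : Fin N → ℝ) (hδ : ∀ ℓ, δ ℓ ∈ Set.Ioc (-1 : ℝ) 0)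
    (g0 : (Fin N → ℝ) → ℝ)
    (hg0 : ∀ x, g0 x = Real.exp ((∑ ℓ, (x ℓ) ^ 2 / lam ℓ) / (2 * a)))
    (x : Fin N → ℝ) :
    (∑ ℓ, lam ℓ * ((a / 2) * (1 + δ ℓ) * pd ℓ (pd ℓ g0) x - x ℓ * pd ℓ g0 x))
      ≤ ((a * N - ∑ ℓ, (x ℓ) ^ 2) / (2 * a)) *
          Real.exp ((∑ ℓ, (x ℓ) ^ 2 / lam ℓ) / (2 * a)) ∧
    (∑ ℓ, lam ℓ * ((a / 2) * (1 + δ ℓ) * pd ℓ (pd ℓ g0) x - x ℓ * pd ℓ g0 x))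
      ≤ (N / 2) * Real.exp (N / 2) := by
  have hquad : ∀ y : Fin N → ℝ,
      (∑ ℓ, y ℓ ^ 2 / lam ℓ) / (2 * a) = ∑ ℓ, (2 * a * lam ℓ)⁻¹ * y ℓ ^ 2 := fun y => by
    rw [sum_div]
    exact sum_congr rfl fun ℓ _ => by field_simp
  have hg : g0 = fun y => exp (∑ ℓ, (2 * a * lam ℓ)⁻¹ * y ℓ ^ 2) := funext fun y => by
    rw [hg0, hquad]
  set E := exp ((∑ ℓ, x ℓ ^ 2 / lam ℓ) / (2 * a))
  have hterm : ∀ ℓ ∈ univ, lam ℓ * (a / 2 * (1 + δ ℓ) * pd ℓ (pd ℓ g0) x - x ℓ * pd ℓ g0 x) ≤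
      E * (1 / 2 - x ℓ ^ 2 / (2 * a)) := fun ℓ _ => by
    rw [hg, pd_pd_exp_sum_mul_sq, pd_exp_sum_mul_sq]
    beta_reduce
    rw [← hquad]
    exact gaussian_generator_term_le ha (hlam ℓ) (hδ ℓ).2 (exp_pos _).le (x ℓ)
  have hsum : ∑ ℓ, E * (1 / 2 - x ℓ ^ 2 / (2 * a)) = (a * N - ∑ ℓ, x ℓ ^ 2) / (2 * a) * E := by
    rw [← mul_sum, sum_sub_distrib, sum_const, card_univ, Fintype.card_fin, nsmul_eq_mul,
      ← sum_div]
    field_simp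
  have hfirst := (sum_le_sum hterm).trans hsum.le
  refine ⟨hfirst, hfirst.trans (sub_div_mul_exp_le ha N.cast_nonneg ?_ ?_)⟩
  · exact sum_nonneg fun ℓ _ => div_nonneg (sq_nonneg _) (zero_le_one.trans (hlam ℓ))
  · exact sum_le_sum fun ℓ _ => div_le_self (sq_nonneg _) (hlam ℓ)

theorem stmt_6 {N : ℕ} (hN : 1 ≤ N) (a : ℝ) (ha : 0 < a)
    (lam : Fin N → ℝ) (hlam : ∀ ℓ, 1 ≤ lam ℓ)
    (δ : Fin N → ℝ) (hδ : ∀ ℓ, δ ℓ ∈ Set.Ioc (-1 : ℝ) 0)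
    (g0 : (Fin N → ℝ) → ℝ)
    (hg0 : ∀ x, g0 x = Real.exp ((∑ ℓ, (x ℓ) ^ 2 / lam ℓ) / (2 * a)))
    (x : Fin N → ℝ) :
    (∑ ℓ, lam ℓ * ((a / 2) * (1 + δ ℓ) * pd ℓ (pd ℓ g0) x - x ℓ * pd ℓ g0 x))
      ≤ ((a * N - ∑ ℓ, (x ℓ) ^ 2) / (2 * a)) *
          Real.exp ((∑ ℓ, (x ℓ) ^ 2 / lam ℓ) / (2 * a)) ∧
    (∑ ℓ, lam ℓ * ((a / 2) * (1 + δ ℓ) * pd ℓ (pd ℓ g0) x - x ℓ * pd ℓ g0 x))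
      ≤ (N / 2) * Real.exp (N / 2) :=
  stmt_6_general a ha lam hlam δ hδ g0 hg0 x
end

section
/- Let n ≥ 2, 1 = μ₁ < μ₂ < … < μ_n, and let η > 0, i₀ ∈ {1,…,n-1}. Suppose s₁,…,s_n ≥ 0 are not all zero, and set u = Σᵢ sᵢ, v = Σᵢ sᵢ/μᵢ. If μ_{i₀} + η ≤ u/v, then s_{i₀+1} + … + s_n ≥ c(η) · u, where c(η) > 0 is a constant depending only on η and μ₁,…,μ_n. -/
theorem stmt_10 (n : ℕ) (hn : 2 ≤ n) (μ : Fin n → ℝ)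
    (hμ1 : μ ⟨0, by omega⟩ = 1) (hmono : StrictMono μ)
    (η : ℝ) (hη : 0 < η) (i0 : ℕ) (hi01 : 1 ≤ i0) (hi0n : i0 ≤ n - 1) :
    ∃ c > 0, ∀ s : Fin n → ℝ, (∀ i, 0 ≤ s i) → s ≠ 0 →
      μ ⟨i0 - 1, by omega⟩ + η ≤ (∑ i, s i) / (∑ i, s i / μ i) →
      c * (∑ i, s i) ≤ ∑ i ∈ Finset.univ.filter (fun i : Fin n => i0 ≤ (i : ℕ)), s i := by
  have hμpos : ∀ i, 0 < μ i := by
    intro i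
    have h0 : (⟨0, by omega⟩ : Fin n) ≤ i := by simp [Fin.le_def]
    have := hmono.monotone h0
    rw [hμ1] at this
    linarith
  set k : Fin n := ⟨i0 - 1, by omega⟩ with hk
  set m : ℝ := μ k with hm
  have hmpos : 0 < m := hμpos k
  refine ⟨η / (m + η), by positivity, ?_⟩
  intro s hs hs0 hle
  set A : ℝ := ∑ i ∈ Finset.univ.filter (fun i : Fin n => ¬ i0 ≤ (i : ℕ)), s i with hA
  set B : ℝ := ∑ i ∈ Finset.univ.filter (fun i : Fin n => i0 ≤ (i : ℕ)), s i with hB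
  have hsplit : B + A = ∑ i, s i :=
    Finset.sum_filter_add_sum_filter_not Finset.univ (fun i : Fin n => i0 ≤ (i : ℕ)) s
  have hA0 : 0 ≤ A := Finset.sum_nonneg fun i _ => hs i
  have hB0 : 0 ≤ B := Finset.sum_nonneg fun i _ => hs i
  set v : ℝ := ∑ i, s i / μ i with hv
  have hv0 : 0 < v := by
    obtain ⟨j, hj⟩ := Function.ne_iff.mp hs0
    have hj' : 0 < s j := lt_of_le_of_ne (hs j) (Ne.symm hj)
    refine Finset.sum_pos' (fun i _ => div_nonneg (hs i) (hμpos i).le)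
      ⟨j, Finset.mem_univ j, div_pos hj' (hμpos j)⟩
  have hle' : (m + η) * v ≤ ∑ i, s i := (le_div_iff₀ hv0).mp hle
  have h1 : A / m ≤ v := by
    have h2 : A / m = ∑ i ∈ Finset.univ.filter (fun i : Fin n => ¬ i0 ≤ (i : ℕ)), s i / m :=
      Finset.sum_div _ _ _
    have h3 : ∀ i ∈ Finset.univ.filter (fun i : Fin n => ¬ i0 ≤ (i : ℕ)), s i / m ≤ s i / μ i := by
      intro i hi
      have hi' : (i : ℕ) < i0 := by simpa using (Finset.mem_filter.mp hi).2
      have hik : i ≤ k := by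
        rw [Fin.le_def]; simp only [hk]; omega
      have hμik : μ i ≤ m := hmono.monotone hik
      gcongr
      · exact hs i
      · exact hμpos i
    have h4 : ∑ i ∈ Finset.univ.filter (fun i : Fin n => ¬ i0 ≤ (i : ℕ)), s i / μ i ≤ v := by
      apply Finset.sum_le_sum_of_subset_of_nonneg (Finset.filter_subset _ _)
      intro i _ _
      exact div_nonneg (hs i) (hμpos i).le
    calc A / m = _ := h2
      _ ≤ _ := Finset.sum_le_sum h3
      _ ≤ v := h4
  have hkey : η * A ≤ m * B := by
    have h5 : (m + η) * (A / m) ≤ B + A := by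
      calc (m + η) * (A / m) ≤ (m + η) * v := by
            apply mul_le_mul_of_nonneg_left h1; positivity
        _ ≤ ∑ i, s i := hle'
        _ = B + A := hsplit.symm
    have h6 : (m + η) * A ≤ m * (B + A) := by
      have := mul_le_mul_of_nonneg_left h5 hmpos.le
      calc (m + η) * A = m * ((m + η) * (A / m)) := by field_simp
        _ ≤ m * (B + A) := this
    nlinarith
  rw [← hsplit, div_mul_eq_mul_div, div_le_iff₀ (by positivity)]
  nlinarith
end

section
/- Let N = 2n with n ≥ 4, let λ_ℓ > 0 with λ_{2i-1} = λ_{2i} =: μᵢ strictly increasing in i, and let x ∈ ℝ^N have components x_a ≠ 0 and x_b ≠ 0 with λ_a ≠ λ_b. Consider the collection of vectors {T_J(x) : J = (k,ℓ,m), λ_k < λ_ℓ < λ_m} ∪ {R_i(x) : 1 ≤ i ≤ n}, where T_J(x) = Σ_{(a',b',c') cyclic perm of J} x_{a'} x_{b'} (1/λ_{a'} - 1/λ_{b'}) e_{c'} and R_i(x) = x_{2i} e_{2i-1} - x_{2i-1} e_{2i}. Then the linear span of this collection equals the (N-2)-dimensional subspace {z ∈ ℝ^N : ⟨z,x⟩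 = 0 and Σ_ℓ z_ℓ x_ℓ/λ_ℓ = 0}. -/
theorem stmt_14 {n : ℕ} (hn : 4 ≤ n) (lam : Fin (2 * n) → ℝ) (hlam : ∀ ℓ, 0 < lam ℓ)
    (hpair : ∀ i : ℕ, (hi : i < n) →
      lam ⟨2 * i, by omega⟩ = lam ⟨2 * i + 1, by omega⟩)
    (hinc : ∀ i j : ℕ, (hij : i < j) → (hj : j < n) →
      lam ⟨2 * i, by omega⟩ < lam ⟨2 * j, by omega⟩)
    (x : Fin (2 * n) → ℝ) (a b : Fin (2 * n))
    (hxa : x a ≠ 0) (hxb : x b ≠ 0) (hab : lam a ≠ lam b)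
    (T : Fin (2 * n) → Fin (2 * n) → Fin (2 * n) → (Fin (2 * n) → ℝ))
    (hT : ∀ k l m, T k l m = fun c =>
      (if c = m then x k * x l * (1 / lam k - 1 / lam l) else 0)
      + (if c = k then x l * x m * (1 / lam l - 1 / lam m) else 0)
      + (if c = l then x m * x k * (1 / lam m - 1 / lam k) else 0))
    (R : ∀ i : ℕ, i < n → (Fin (2 * n) → ℝ))
    (hR : ∀ i : ℕ, (hi : i < n) → R i hi = fun c =>
      if c = (⟨2 * i, by omega⟩ : Fin (2 * n)) then x ⟨2 * i + 1, by omega⟩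
      else if c = (⟨2 * i + 1, by omega⟩ : Fin (2 * n)) then - x ⟨2 * i, by omega⟩
      else 0)
    (S : Set (Fin (2 * n) → ℝ))
    (hS : S = {v | ∃ k l m, lam k < lam l ∧ lam l < lam m ∧ v = T k l m} ∪
      {v | ∃ (i : ℕ) (hi : i < n), v = R i hi}) :
    (Submodule.span ℝ S : Set (Fin (2 * n) → ℝ)) =
      {z | (∑ ℓ, z ℓ * x ℓ) = 0 ∧ (∑ ℓ, z ℓ * x ℓ / lam ℓ) = 0} ∧
    Module.finrank ℝ (Submodule.span ℝ S) = 2 * n - 2 := by 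
  classical
  have hab' : a ≠ b := fun h => hab (by rw [h])
  have hlam0 : ∀ ℓ, lam ℓ ≠ 0 := fun ℓ => (hlam ℓ).ne'
  -- structure of lam
  have hmu : ∀ c : Fin (2 * n), lam c = lam ⟨2 * (c.val / 2), by have := c.isLt; omega⟩ := by
    intro c
    by_cases hp : c.val % 2 = 0
    · exact congrArg lam (Fin.ext (show c.val = 2 * (c.val / 2) by omega))
    · have h1 : c = ⟨2 * (c.val / 2) + 1, by have := c.isLt; omega⟩ :=
        Fin.ext (show c.val = 2 * (c.val / 2) + 1 by omega)
      conv_lhs => rw [h1]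
      exact (hpair (c.val / 2) (by have := c.isLt; omega)).symm
  have hlt : ∀ c d : Fin (2 * n), c.val / 2 < d.val / 2 → lam c < lam d := by
    intro c d h
    rw [hmu c, hmu d]
    exact hinc _ _ h (by have := d.isLt; omega)
  have heq2 : ∀ c d : Fin (2 * n), c.val / 2 = d.val / 2 → lam c = lam d := by
    intro c d h
    rw [hmu c, hmu d]
    exact congrArg lam (Fin.ext (show 2 * (c.val / 2) = 2 * (d.val / 2) by omega))
  have hsame : ∀ c d : Fin (2 * n), lam c = lam d → c.val / 2 = d.val / 2 := by
    intro c d h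
    by_contra hcd
    rcases Nat.lt_or_ge (c.val / 2) (d.val / 2) with h' | h'
    · exact (hlt c d h').ne h
    · exact (hlt d c (by omega)).ne h.symm
  -- the two linear functionals
  let f : (Fin (2 * n) → ℝ) →ₗ[ℝ] ℝ :=
    { toFun := fun z => ∑ ℓ, z ℓ * x ℓ
      map_add' := fun y z => by simp [add_mul, Finset.sum_add_distrib]
      map_smul' := fun r z => by simp [Finset.mul_sum, mul_assoc]
    }
  let g : (Fin (2 * n) → ℝ) →ₗ[ℝ] ℝ :=
    { toFun := fun z => ∑ ℓ, z ℓ * x ℓ / lam ℓ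
      map_add' := fun y z => by simp [add_mul, add_div, Finset.sum_add_distrib]
      map_smul' := fun r z => by simp [Finset.mul_sum, mul_assoc, mul_div_assoc]
    }
  set W : Submodule ℝ (Fin (2 * n) → ℝ) := LinearMap.ker f ⊓ LinearMap.ker g with hWdef
  have hW : ∀ z : Fin (2 * n) → ℝ,
      z ∈ W ↔ (∑ ℓ, z ℓ * x ℓ) = 0 ∧ (∑ ℓ, z ℓ * x ℓ / lam ℓ) = 0 := by
    intro z
    rw [hWdef, Submodule.mem_inf, LinearMap.mem_ker, LinearMap.mem_ker]
    exact Iff.rfl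
  -- sums of functions supported at two points
  have sum2 : ∀ (p q : Fin (2 * n)), p ≠ q → ∀ w : Fin (2 * n) → ℝ,
      (∀ ℓ, ℓ ≠ p → ℓ ≠ q → w ℓ = 0) → (∑ ℓ, w ℓ) = w p + w q := by
    intro p q hpq w hw
    have h1 : (∑ ℓ ∈ ({p, q} : Finset (Fin (2 * n))), w ℓ) = ∑ ℓ, w ℓ := by
      refine Finset.sum_subset (Finset.subset_univ _) ?_
      intro ℓ _ hℓ
      simp only [Finset.mem_insert, Finset.mem_singleton] at hℓ
      push_neg at hℓ
      exact hw ℓ hℓ.1 hℓ.2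
    rw [← h1, Finset.sum_pair hpq]
  -- generators lie in W
  have hTmemW : ∀ k l m, T k l m ∈ W := by
    intro k l m
    refine (hW _).2 ⟨?_, ?_⟩
    · simp only [hT, add_mul, ite_mul, zero_mul, Finset.sum_add_distrib,
        Finset.sum_ite_eq', Finset.mem_univ, if_true]
      ring
    · simp only [hT, add_mul, div_eq_mul_inv, ite_mul, zero_mul, Finset.sum_add_distrib,
        Finset.sum_ite_eq', Finset.mem_univ, if_true]
      ring
  have hRmemW : ∀ (i : ℕ) (hi : i < n), R i hi ∈ W := by
    intro i hi
    have hi2 : 2 * i < 2 * n := by omega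
    have hi2' : 2 * i + 1 < 2 * n := by omega
    have hne01 : (⟨2 * i, hi2⟩ : Fin (2 * n)) ≠ ⟨2 * i + 1, hi2'⟩ := by
      intro h
      have h2 : (2 * i : ℕ) = 2 * i + 1 := congrArg Fin.val h
      omega
    have hoff : ∀ ℓ : Fin (2 * n), ℓ ≠ ⟨2 * i, hi2⟩ → ℓ ≠ ⟨2 * i + 1, hi2'⟩ → R i hi ℓ = 0 := by
      intro ℓ h1 h2
      simp only [hR]
      rw [if_neg h1, if_neg h2]
    have hRa : R i hi ⟨2 * i, hi2⟩ = x ⟨2 * i + 1, hi2'⟩ := by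
      simp [hR]
    have hRb : R i hi ⟨2 * i + 1, hi2'⟩ = - x ⟨2 * i, hi2⟩ := by
      simp only [hR]
      rw [if_neg (Ne.symm hne01)]
      simp
    refine (hW _).2 ⟨?_, ?_⟩
    · rw [sum2 _ _ hne01 _ (fun ℓ h1 h2 => by rw [hoff ℓ h1 h2, zero_mul]), hRa, hRb]
      ring
    · rw [sum2 _ _ hne01 _ (fun ℓ h1 h2 => by rw [hoff ℓ h1 h2, zero_mul, zero_div]), hRa, hRb]
      rw [show lam (⟨2 * i + 1, hi2'⟩ : Fin (2 * n)) = lam ⟨2 * i, hi2⟩ from (hpair i hi).symm]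
      ring
  have hspanW : Submodule.span ℝ S ≤ W := by
    rw [Submodule.span_le]
    rintro v hv
    rw [hS] at hv
    simp only [Set.mem_union, Set.mem_setOf_eq] at hv
    rcases hv with ⟨k, l, m, _, _, rfl⟩ | ⟨i, hi, rfl⟩
    · exact hTmemW k l m
    · exact hRmemW i hi
  -- T in any order with pairwise distinct lam values lies in the span
  have hTcyc : ∀ k l m, T k l m = T l m k := by
    intro k l m
    funext c
    simp only [hT]
    split_ifs <;> subst_vars <;> ring
  have hTswap : ∀ k l m, T k l m = -T l k m := by
    intro k l m
    funext c
    simp only [hT, Pi.neg_apply]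
    split_ifs <;> subst_vars <;> ring
  have hTspan : ∀ c : Fin (2 * n), lam c ≠ lam a → lam c ≠ lam b →
      T a b c ∈ Submodule.span ℝ S := by
    intro c hca hcb
    have mem : ∀ k l m, lam k < lam l → lam l < lam m → T k l m ∈ Submodule.span ℝ S :=
      fun k l m h1 h2 => Submodule.subset_span (by rw [hS]; exact Or.inl ⟨k, l, m, h1, h2, rfl⟩)
    rcases hab.lt_or_gt with h1 | h1 <;>
      rcases hca.lt_or_gt with h2 | h2 <;>
        rcases hcb.lt_or_gt with h3 | h3
    · rw [hTcyc a b c, hTcyc b c a]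
      exact mem c a b h2 h1
    · exfalso; linarith
    · rw [hTswap a b c, hTcyc b a c]
      exact Submodule.neg_mem _ (mem a c b h2 h3)
    · exact mem a b c h1 h3
    · rw [hTcyc a b c, hTswap b c a]
      exact Submodule.neg_mem _ (mem c b a h3 h1)
    · rw [hTcyc a b c]
      exact mem b c a h3 h2
    · exfalso; linarith
    · rw [hTswap a b c]
      exact Submodule.neg_mem _ (mem b a c h1 h2)
  -- main inclusion W ≤ span S
  have hBmain : ∀ z : Fin (2 * n) → ℝ, z ∈ W → z ∈ Submodule.span ℝ S := by
    intro z hz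
    set pt : Fin (2 * n) → Fin (2 * n) :=
      fun c => ⟨2 * (c.val / 2) + (1 - c.val % 2), by have := c.isLt; omega⟩ with hptd
    have hptval : ∀ c : Fin (2 * n), (pt c).val = 2 * (c.val / 2) + (1 - c.val % 2) :=
      fun c => rfl
    have hptpt : ∀ c, pt (pt c) = c := by
      intro c
      apply Fin.ext
      rw [hptval, hptval]
      omega
    have hpt_eq : ∀ c d : Fin (2 * n), c.val / 2 = d.val / 2 → c ≠ d → c = pt d := by
      intro c d h hne
      apply Fin.ext
      rw [hptval]
      have hvne : c.val ≠ d.val := fun h' => hne (Fin.ext h')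
      omega
    set ρ : Fin (2 * n) → ℝ :=
      fun c => if c.val % 2 = 0 then x (pt c) else - x (pt c) with hρd
    have hRoff : ∀ (i : ℕ) (hi : i < n) (c : Fin (2 * n)), c.val / 2 ≠ i → R i hi c = 0 := by
      intro i hi c h
      simp only [hR]
      rw [if_neg, if_neg]
      · intro hc
        have h2 : c.val = 2 * i + 1 := congrArg Fin.val hc
        omega
      · intro hc
        have h2 : c.val = 2 * i := congrArg Fin.val hc
        omega
    have hRdiag : ∀ (c : Fin (2 * n)) (hc : c.val / 2 < n), R (c.val / 2) hc c = ρ c := by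
      intro c hc
      simp only [hR, hρd]
      by_cases hp : c.val % 2 = 0
      · rw [if_pos (Fin.ext (show c.val = 2 * (c.val / 2) by omega) :
            c = ⟨2 * (c.val / 2), by omega⟩), if_pos hp]
        exact congrArg x (Fin.ext (show (2 * (c.val / 2) + 1 : ℕ) = (pt c).val by
          rw [hptval]; omega))
      · rw [if_neg (show c ≠ ⟨2 * (c.val / 2), by omega⟩ from fun h => by
            have h2 : c.val = 2 * (c.val / 2) := congrArg Fin.val h
            omega),
          if_pos (Fin.ext (show c.val = 2 * (c.val / 2) + 1 by omega) :
            c = ⟨2 * (c.val / 2) + 1, by omega⟩), if_neg hp]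
        exact congrArg (fun t => - x t) (Fin.ext (show (2 * (c.val / 2) : ℕ) = (pt c).val by
          rw [hptval]; omega))
    have hκ : x a * x b * (1 / lam a - 1 / lam b) ≠ 0 := by
      apply mul_ne_zero (mul_ne_zero hxa hxb)
      rw [sub_ne_zero]
      intro h
      have h2 : (1 : ℝ) * lam b = 1 * lam a := (div_eq_div_iff (hlam0 a) (hlam0 b)).1 h
      apply hab
      linarith
    set v : Fin (2 * n) → (Fin (2 * n) → ℝ) :=
      fun c => if lam c ≠ lam a ∧ lam c ≠ lam b then T a b c
        else R (c.val / 2) (by have := c.isLt; omega) with hvd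
    set γ : Fin (2 * n) → ℝ :=
      fun c => if lam c ≠ lam a ∧ lam c ≠ lam b then
          z c / (x a * x b * (1 / lam a - 1 / lam b))
        else if c = a ∨ c = b then 0 else z c / ρ c with hγd
    have hvmem : ∀ c, v c ∈ Submodule.span ℝ S := by
      intro c
      simp only [hvd]
      by_cases hc : lam c ≠ lam a ∧ lam c ≠ lam b
      · rw [if_pos hc]; exact hTspan c hc.1 hc.2
      · rw [if_neg hc]
        refine Submodule.subset_span ?_
        rw [hS]
        exact Or.inr ⟨c.val / 2, by have := c.isLt; omega, rfl⟩
    have hsum_mem : (∑ d, γ d • v d) ∈ Submodule.span ℝ S :=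
      Submodule.sum_mem _ fun d _ => Submodule.smul_mem _ _ (hvmem d)
    set y : Fin (2 * n) → ℝ := z - ∑ d, γ d • v d with hyd
    have hyW : y ∈ W := Submodule.sub_mem W hz (hspanW hsum_mem)
    have hy0 : ∀ c : Fin (2 * n), c ≠ a → c ≠ b → y c = 0 := by
      intro c hca hcb
      have hsum_c : (∑ d, γ d • v d) c = ∑ d, γ d * v d c := by
        rw [Finset.sum_apply]
        exact Finset.sum_congr rfl (fun d _ => rfl)
      have hoffd : ∀ d ∈ Finset.univ, d ≠ c → γ d * v d c = 0 := by
        intro d _ hdc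
        by_cases hd : lam d ≠ lam a ∧ lam d ≠ lam b
        · have hvdc : v d c = 0 := by
            simp only [hvd]
            rw [if_pos hd]
            simp only [hT]
            rw [if_neg (Ne.symm hdc), if_neg hca, if_neg hcb]
            ring
          rw [hvdc, mul_zero]
        · by_cases hdab : d = a ∨ d = b
          · have hγ0 : γ d = 0 := by
              simp only [hγd]
              rw [if_neg hd, if_pos hdab]
            rw [hγ0, zero_mul]
          · push_neg at hdab
            have hd' := hd
            push_neg at hd'
            have hcd2 : c.val / 2 ≠ d.val / 2 := by
              intro h
              have hlcd : lam c = lam d := heq2 c d h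
              by_cases h1 : lam d = lam a
              · have hc1 : c = pt a := hpt_eq c a (hsame c a (hlcd.trans h1)) hca
                have hd1 : d = pt a := hpt_eq d a (hsame d a h1) hdab.1
                exact hdc (hd1.trans hc1.symm)
              · have h2 : lam d = lam b := hd' h1
                have hc1 : c = pt b := hpt_eq c b (hsame c b (hlcd.trans h2)) hcb
                have hd1 : d = pt b := hpt_eq d b (hsame d b h2) hdab.2
                exact hdc (hd1.trans hc1.symm)
            have hvdc : v d c = 0 := by
              simp only [hvd]
              rw [if_neg hd]
              exact hRoff _ _ c hcd2
            rw [hvdc, mul_zero]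
      have hdiag : γ c * v c c = z c := by
        by_cases hc : lam c ≠ lam a ∧ lam c ≠ lam b
        · have hvc : v c c = x a * x b * (1 / lam a - 1 / lam b) := by
            simp only [hvd]
            rw [if_pos hc]
            simp only [hT]
            rw [if_neg hca, if_neg hcb]
            simp
          have hγc : γ c = z c / (x a * x b * (1 / lam a - 1 / lam b)) := by
            simp only [hγd]
            rw [if_pos hc]
          rw [hvc, hγc]
          exact div_mul_cancel₀ (z c) hκ
        · have hc' := hc
          push_neg at hc'
          have hptc : x (pt c) ≠ 0 := by
            by_cases hca' : lam c = lam a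
            · have h1 : c = pt a := hpt_eq c a (hsame c a hca') hca
              rw [h1, hptpt]; exact hxa
            · have hcb' : lam c = lam b := hc' hca'
              have h1 : c = pt b := hpt_eq c b (hsame c b hcb') hcb
              rw [h1, hptpt]; exact hxb
          have hρc : ρ c ≠ 0 := by
            simp only [hρd]
            by_cases hp : c.val % 2 = 0
            · rw [if_pos hp]; exact hptc
            · rw [if_neg hp]; exact neg_ne_zero.2 hptc
          have hvc : v c c = ρ c := by
            simp only [hvd]
            rw [if_neg hc]
            exact hRdiag c _
          have hγc : γ c = z c / ρ c := by
            simp only [hγd]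
            rw [if_neg hc, if_neg (by rintro (h | h); exacts [hca h, hcb h])]
          rw [hvc, hγc]
          exact div_mul_cancel₀ (z c) hρc
      have hmain : ∑ d, γ d * v d c = z c := by
        rw [Finset.sum_eq_single c hoffd (fun h => absurd (Finset.mem_univ c) h)]
        exact hdiag
      rw [hyd]
      simp only [Pi.sub_apply]
      rw [hsum_c, hmain, sub_self]
    obtain ⟨h1f, h2g⟩ := (hW y).1 hyW
    rw [sum2 a b hab' _ (fun ℓ u1 u2 => by rw [hy0 ℓ u1 u2, zero_mul])] at h1f
    rw [sum2 a b hab' _ (fun ℓ u1 u2 => by rw [hy0 ℓ u1 u2, zero_mul, zero_div])] at h2g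
    have hba : lam b - lam a ≠ 0 := sub_ne_zero.2 (Ne.symm hab)
    have h2' : y a * x a * lam b + y b * x b * lam a = 0 := by
      have h4 := h2g
      field_simp [hlam0 a, hlam0 b] at h4
      linear_combination h4
    have hp0 : y a * x a = 0 := by
      have h3 : y a * x a * (lam b - lam a) = 0 := by linear_combination h2' - lam a * h1f
      exact (mul_eq_zero.1 h3).resolve_right hba
    have hya : y a = 0 := (mul_eq_zero.1 hp0).resolve_right hxa
    have hyb : y b = 0 := by
      have hq0 : y b * x b = 0 := by linarith
      exact (mul_eq_zero.1 hq0).resolve_right hxb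
    have hy_all : y = 0 := by
      funext c
      by_cases h1 : c = a
      · rw [h1]; exact hya
      · by_cases h2 : c = b
        · rw [h2]; exact hyb
        · exact hy0 c h1 h2
    have hz_eq : z = ∑ d, γ d • v d := by
      rw [hyd] at hy_all
      exact sub_eq_zero.1 hy_all
    rw [hz_eq]
    exact hsum_mem
  have hspan_eq : Submodule.span ℝ S = W := le_antisymm hspanW (fun z hz => hBmain z hz)
  constructor
  · rw [hspan_eq]
    ext z
    simp only [SetLike.mem_coe, Set.mem_setOf_eq]
    exact hW z
  · set Φ : (Fin (2 * n) → ℝ) →ₗ[ℝ] ℝ × ℝ := f.prod g with hΦd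
    have hker : LinearMap.ker Φ = W := by
      ext z
      rw [hWdef]
      simp [hΦd, LinearMap.mem_ker, LinearMap.prod_apply, Prod.mk_eq_zero, Submodule.mem_inf]
    have hsurj : Function.Surjective Φ := by
      rintro ⟨p, q⟩
      have hba : lam b - lam a ≠ 0 := sub_ne_zero.2 (Ne.symm hab)
      set s : ℝ := lam a * (q * lam b - p) / (lam b - lam a) with hs
      set zz : Fin (2 * n) → ℝ :=
        fun c => if c = a then s / x a else if c = b then (p - s) / x b else 0 with hzz
      have hza : zz a = s / x a := by simp [hzz]
      have hzb : zz b = (p - s) / x b := by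
        simp only [hzz]
        rw [if_neg (Ne.symm hab')]
        simp
      have hzoff : ∀ ℓ, ℓ ≠ a → ℓ ≠ b → zz ℓ = 0 := by
        intro ℓ h1 h2
        simp only [hzz]
        rw [if_neg h1, if_neg h2]
      refine ⟨zz, ?_⟩
      have hfz : (∑ ℓ, zz ℓ * x ℓ) = p := by
        rw [sum2 a b hab' _ (fun ℓ h1 h2 => by rw [hzoff ℓ h1 h2, zero_mul]), hza, hzb]
        rw [div_mul_cancel₀ _ hxa, div_mul_cancel₀ _ hxb]
        ring
      have hgz : (∑ ℓ, zz ℓ * x ℓ / lam ℓ) = q := by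
        rw [sum2 a b hab' _ (fun ℓ h1 h2 => by rw [hzoff ℓ h1 h2, zero_mul, zero_div]),
          hza, hzb]
        rw [div_mul_cancel₀ _ hxa, div_mul_cancel₀ _ hxb, hs]
        field_simp [hlam0 a, hlam0 b, hba]
        ring
      show (f zz, g zz) = (p, q)
      rw [show f zz = ∑ ℓ, zz ℓ * x ℓ from rfl, show g zz = ∑ ℓ, zz ℓ * x ℓ / lam ℓ from rfl,
        hfz, hgz]
    have hrank := LinearMap.finrank_range_add_finrank_ker Φ
    rw [LinearMap.range_eq_top.2 hsurj, hker, ← hspan_eq] at hrank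
    have h2 : Module.finrank ℝ (⊤ : Submodule ℝ (ℝ × ℝ)) = 2 := by
      rw [finrank_top]
      simp [Module.finrank_prod]
    have h3 : Module.finrank ℝ (Fin (2 * n) → ℝ) = 2 * n := by
      simp [Module.finrank_fintype_fun_eq_card]
    rw [h2, h3] at hrank
    omega
end
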